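/- arXiv:2307.05878 — 2 statements merged into one kernel-verified Lean document; each statement's English description precedes it below -/
import Mathlib

section
/- The Laplace transform of f(t) = (1/(2t√(2πt))) · exp(−1/(8t)) equals g(s) = exp(−√(s/2)) for all s > 0. -/
/-!
With `t = u²` the transform becomes `2 ∫₀^∞ exp (-(a u² + b / u²)) / u² du` (here `a = s`,
`b = 1/8`). Writing `α = √a`, `β = √b`, the exponent is `-(α u - β / u)² - 2 α β`, and
`x = α u - β / u` maps `(0, ∞)` bijectively onto `ℝ` with `dx = (α + β / u²) du`, so the Gaussian
integral gives `∫₀^∞ (α + β / u²) exp (-(a u² + b / u²)) du = √π e^{-2αβ}`. The inversion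
`u ↦ β / (α u)` exchanges the two halves `α ∫ …` and `β ∫ … / u²`, so each is half of it.
-/

open Real MeasureTheory Set

section ChangeOfVariables

variable {E : Type*} [NormedAddCommGroup E] [NormedSpace ℝ E]

theorem integral_comp_div_Ioi (g : ℝ → E) {c : ℝ} (hc : 0 < c) :
    ∫ x in Ioi 0, (c / x ^ 2) • g (c / x) = ∫ x in Ioi 0, g x := by
  have hinv : ∀ x ∈ Ioi (0 : ℝ), c / (c / x) = x := fun x _ => div_div_cancel₀ hc.ne'
  have himage : (fun x => c / x) '' Ioi 0 = Ioi 0 :=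
    (image_subset_iff.2 fun x hx => div_pos hc hx).antisymm
      fun x hx => ⟨c / x, div_pos hc hx, hinv x hx⟩
  have hderiv : ∀ x ∈ Ioi (0 : ℝ), HasDerivWithinAt (fun x => c / x) (-(c / x ^ 2)) (Ioi 0) x :=
    fun x hx =>
      (((hasDerivAt_inv (ne_of_gt hx)).const_mul c).congr_deriv (by ring)).hasDerivWithinAt
  have hinj : InjOn (fun x => c / x) (Ioi 0) := fun x hx y hy hxy => by
    rw [← hinv x hx, ← hinv y hy]; exact congrArg (c / ·) hxy
  conv_rhs =>
    rw [← himage, integral_image_eq_integral_abs_deriv_smul measurableSet_Ioi hderiv hinj]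
  refine setIntegral_congr_fun measurableSet_Ioi fun x hx => ?_
  rw [abs_neg, abs_of_pos (div_pos hc (pow_pos hx 2))]

theorem hasDerivAt_mul_sub_div (α β : ℝ) {u : ℝ} (hu : u ≠ 0) :
    HasDerivAt (fun u => α * u - β / u) (α + β / u ^ 2) u :=
  (((hasDerivAt_id u).const_mul α).sub ((hasDerivAt_inv hu).const_mul β)).congr_deriv (by ring)

variable {α β : ℝ}

theorem strictMonoOn_mul_sub_div (hα : 0 < α) (hβ : 0 ≤ β) :
    StrictMonoOn (fun u => α * u - β / u) (Ioi 0) := fun u hu v _ huv => by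
  have hdiv : β / v ≤ β / u := div_le_div_of_nonneg_left hβ hu huv.le
  have hmul : α * u < α * v := mul_lt_mul_of_pos_left huv hα
  dsimp only
  linarith

theorem image_mul_sub_div_Ioi (hα : 0 < α) (hβ : 0 < β) :
    (fun u => α * u - β / u) '' Ioi 0 = univ := by
  refine eq_univ_of_forall fun y => ?_
  set D := √(y ^ 2 + 4 * α * β)
  have hD : D ^ 2 = y ^ 2 + 4 * α * β := sq_sqrt (by positivity)
  have hyD : 0 < y + D := by nlinarith [sqrt_nonneg (y ^ 2 + 4 * α * β), mul_pos hα hβ]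
  -- the positive root of `α u² - y u - β`
  refine ⟨(y + D) / (2 * α), div_pos hyD (by positivity), ?_⟩
  field_simp
  linear_combination hD

theorem integral_comp_mul_sub_div_Ioi (g : ℝ → E) (hα : 0 < α) (hβ : 0 < β) :
    ∫ u in Ioi 0, (α + β / u ^ 2) • g (α * u - β / u) = ∫ x, g x := by
  conv_rhs => rw [← setIntegral_univ, ← image_mul_sub_div_Ioi hα hβ,
    integral_image_eq_integral_abs_deriv_smul measurableSet_Ioi
      (fun u hu => (hasDerivAt_mul_sub_div α β (ne_of_gt hu)).hasDerivWithinAt)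
      (strictMonoOn_mul_sub_div hα hβ.le).injOn]
  refine setIntegral_congr_fun measurableSet_Ioi fun u _ => ?_
  rw [abs_of_pos (by positivity)]

theorem integrableOn_comp_mul_sub_div_Ioi_iff (g : ℝ → E) (hα : 0 < α) (hβ : 0 < β) :
    IntegrableOn (fun u => (α + β / u ^ 2) • g (α * u - β / u)) (Ioi 0) ↔ Integrable g := by
  rw [← integrableOn_univ, ← image_mul_sub_div_Ioi hα hβ,
    integrableOn_image_iff_integrableOn_abs_deriv_smul (measurableSet_Ioi (a := (0 : ℝ)))
      (fun u hu => (hasDerivAt_mul_sub_div α β (ne_of_gt hu)).hasDerivWithinAt)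
      (strictMonoOn_mul_sub_div hα hβ.le).injOn]
  refine integrableOn_congr_fun (fun u _ => ?_) measurableSet_Ioi
  rw [abs_of_pos (by positivity)]

end ChangeOfVariables

section GaussianTypeIntegral

variable {a b : ℝ}

theorem exp_neg_mul_sq_sub_div_sq (ha : 0 ≤ a) (hb : 0 ≤ b) {u : ℝ} (hu : u ≠ 0) :
    exp (-(a * u ^ 2) - b / u ^ 2) = exp (-(2 * √a * √b)) * exp (-(√a * u - √b / u) ^ 2) := by
  rw [← exp_add]
  congr 1
  field_simp
  linear_combination u ^ 4 * sq_sqrt ha + sq_sqrt hb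

theorem integrableOn_sqrt_add_div_sq_mul_exp (ha : 0 < a) (hb : 0 < b) :
    IntegrableOn (fun u => (√a + √b / u ^ 2) * exp (-(a * u ^ 2) - b / u ^ 2)) (Ioi 0) := by
  have hgauss : Integrable fun x : ℝ => exp (-x ^ 2) := by
    simpa using integrable_exp_neg_mul_sq one_pos
  refine IntegrableOn.congr_fun
    (((integrableOn_comp_mul_sub_div_Ioi_iff _ (sqrt_pos.2 ha) (sqrt_pos.2 hb)).2
      hgauss).const_mul (exp (-(2 * √a * √b)))) (fun u hu => ?_) measurableSet_Ioi
  rw [exp_neg_mul_sq_sub_div_sq ha.le hb.le (ne_of_gt hu), smul_eq_mul, mul_left_comm]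

theorem integral_sqrt_add_div_sq_mul_exp (ha : 0 < a) (hb : 0 < b) :
    ∫ u in Ioi 0, (√a + √b / u ^ 2) * exp (-(a * u ^ 2) - b / u ^ 2)
      = exp (-(2 * √a * √b)) * √π := by
  have hgauss : ∫ x, exp (-x ^ 2) = √π := by simpa using integral_gaussian 1
  rw [← hgauss, ← integral_comp_mul_sub_div_Ioi _ (sqrt_pos.2 ha) (sqrt_pos.2 hb),
    ← integral_const_mul]
  refine setIntegral_congr_fun measurableSet_Ioi fun u hu => ?_
  rw [exp_neg_mul_sq_sub_div_sq ha.le hb.le (ne_of_gt hu), smul_eq_mul, mul_left_comm]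

theorem integral_sqrt_mul_exp_eq_integral_sqrt_div_sq_mul_exp (ha : 0 < a) (hb : 0 < b) :
    ∫ u in Ioi 0, √a * exp (-(a * u ^ 2) - b / u ^ 2)
      = ∫ u in Ioi 0, √b / u ^ 2 * exp (-(a * u ^ 2) - b / u ^ 2) := by
  rw [← integral_comp_div_Ioi _ (div_pos (sqrt_pos.2 hb) (sqrt_pos.2 ha))]
  refine setIntegral_congr_fun measurableSet_Ioi fun u hu => ?_
  have hu : u ≠ 0 := ne_of_gt hu
  have hexponent :
      -(a * (√b / √a / u) ^ 2) - b / (√b / √a / u) ^ 2 = -(a * u ^ 2) - b / u ^ 2 := by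
    rw [div_pow, div_pow, sq_sqrt ha.le, sq_sqrt hb.le]
    field_simp
    ring
  rw [smul_eq_mul, hexponent]
  field_simp

theorem integral_exp_neg_mul_sq_sub_div_sq_div_sq (ha : 0 < a) (hb : 0 < b) :
    ∫ u in Ioi 0, exp (-(a * u ^ 2) - b / u ^ 2) / u ^ 2
      = √π / (2 * √b) * exp (-(2 * √a * √b)) := by
  set F : ℝ → ℝ := fun u => exp (-(a * u ^ 2) - b / u ^ 2)
  have hint := integrableOn_sqrt_add_div_sq_mul_exp ha hb
  have hint₁ : IntegrableOn (fun u => √a * F u) (Ioi 0) := by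
    refine hint.mono' (by fun_prop : Measurable fun u => √a * F u).aestronglyMeasurable ?_
    refine (ae_restrict_iff' measurableSet_Ioi).2 (.of_forall fun u _ => ?_)
    rw [norm_of_nonneg (by positivity)]
    exact mul_le_mul_of_nonneg_right (le_add_of_nonneg_right (by positivity)) (exp_pos _).le
  have hint₂ : IntegrableOn (fun u => √b / u ^ 2 * F u) (Ioi 0) := by
    refine hint.mono'
      (by fun_prop : Measurable fun u => √b / u ^ 2 * F u).aestronglyMeasurable ?_
    refine (ae_restrict_iff' measurableSet_Ioi).2 (.of_forall fun u _ => ?_)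
    rw [norm_of_nonneg (by positivity)]
    exact mul_le_mul_of_nonneg_right (le_add_of_nonneg_left (sqrt_nonneg a)) (exp_pos _).le
  have htotal := integral_sqrt_add_div_sq_mul_exp ha hb
  simp only [add_mul] at htotal
  rw [integral_add hint₁ hint₂, integral_sqrt_mul_exp_eq_integral_sqrt_div_sq_mul_exp ha hb,
    ← two_mul, ← integral_const_mul] at htotal
  calc ∫ u in Ioi 0, F u / u ^ 2
      = (2 * √b)⁻¹ * ∫ u in Ioi 0, 2 * (√b / u ^ 2 * F u) := by
        rw [← integral_const_mul]
        refine setIntegral_congr_fun measurableSet_Ioi fun u _ => ?_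
        field_simp
    _ = √π / (2 * √b) * exp (-(2 * √a * √b)) := by
        rw [htotal]
        ring

theorem integral_exp_neg_mul_sub_div_div_mul_sqrt (ha : 0 < a) (hb : 0 < b) :
    ∫ t in Ioi 0, exp (-(a * t) - b / t) / (t * √t) = √(π / b) * exp (-(2 * √(a * b))) := by
  rw [← integral_comp_rpow_Ioi_of_pos (g := fun t => exp (-(a * t) - b / t) / (t * √t)) two_pos]
  have hsubst : ∀ u ∈ Ioi (0 : ℝ),
      (2 * u ^ ((2 : ℝ) - 1)) • (exp (-(a * u ^ (2 : ℝ)) - b / u ^ (2 : ℝ))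
        / (u ^ (2 : ℝ) * √(u ^ (2 : ℝ)))) = 2 * (exp (-(a * u ^ 2) - b / u ^ 2) / u ^ 2) :=
    fun u hu => by
      have hu : 0 < u := hu
      rw [show (2 : ℝ) - 1 = 1 by norm_num, rpow_one, rpow_two, sqrt_sq hu.le, smul_eq_mul]
      field_simp
  rw [setIntegral_congr_fun measurableSet_Ioi hsubst, integral_const_mul,
    integral_exp_neg_mul_sq_sub_div_sq_div_sq ha hb, sqrt_div' π hb.le, sqrt_mul ha.le]
  field_simp

end GaussianTypeIntegral

theorem laplace_transform_example :
    ∀ s : ℝ, 0 < s →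
      ∫ t in Set.Ioi (0:ℝ),
        Real.exp (-s * t) * (1 / (2 * t * Real.sqrt (2 * π * t)) * Real.exp (-1 / (8 * t)))
      = Real.exp (-Real.sqrt (s / 2)) := by
  intro s hs
  have hintegrand : ∀ t ∈ Ioi (0 : ℝ),
      exp (-s * t) * (1 / (2 * t * √(2 * π * t)) * exp (-1 / (8 * t)))
        = (2 * √(2 * π))⁻¹ * (exp (-(s * t) - 1 / 8 / t) / (t * √t)) := fun t ht => by
    have ht : 0 < t := ht
    rw [sqrt_mul (by positivity) t, show -(s * t) - 1 / 8 / t = -s * t + -1 / (8 * t) by ring,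
      exp_add]
    field_simp
  have hconst : √(π / (1 / 8)) = 2 * √(2 * π) := by
    rw [show π / (1 / 8) = 2 ^ 2 * (2 * π) by ring, sqrt_mul (by norm_num), sqrt_sq two_pos.le]
  have hexponent : 2 * √(s * (1 / 8)) = √(s / 2) := by
    rw [show s * (1 / 8) = s / 2 / 2 ^ 2 by ring, sqrt_div' _ (by norm_num), sqrt_sq two_pos.le]
    ring
  rw [setIntegral_congr_fun measurableSet_Ioi hintegrand, integral_const_mul,
    integral_exp_neg_mul_sub_div_div_mul_sqrt hs (by norm_num), hconst, hexponent]
  field_simp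
end

section
/- The Laplace transform is injective on nonnegative integrable functions: if ∫₀^∞ e^{−st} f₁(t) dt = ∫₀^∞ e^{−st} f₂(t) dt for all s > 0, with f₁, f₂ integrable, then f₁ = f₂ almost everywhere. -/
open Real MeasureTheory Set Polynomial

-- integrability of (continuous fn of exp(-t)) * g on Ioi 0
lemma aux_int (g : ℝ → ℝ) (hg : IntegrableOn g (Ioi 0)) (c : ℝ → ℝ) (hc : Continuous c) :
    IntegrableOn (fun t => c (Real.exp (-t)) * g t) (Ioi 0) := by
  obtain ⟨C, hC⟩ := (isCompact_Icc (a := (0:ℝ)) (b := 1)).exists_bound_of_continuousOn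
    hc.continuousOn
  refine Integrable.mono' (hg.norm.const_mul C) ?_ ?_
  · exact ((hc.comp (by continuity)).aestronglyMeasurable).mul hg.1
  · rw [ae_restrict_iff' measurableSet_Ioi]
    filter_upwards with t ht
    have h1 : Real.exp (-t) ∈ Icc (0:ℝ) 1 := by
      constructor
      · exact (Real.exp_pos _).le
      · exact Real.exp_le_one_iff.mpr (by simpa using le_of_lt ht)
    have := hC _ h1
    calc ‖c (Real.exp (-t)) * g t‖ = ‖c (Real.exp (-t))‖ * ‖g t‖ := norm_mul _ _
      _ ≤ C * ‖g t‖ := by gcongr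

-- integrability of exp(-s t) * g on Ioi 0
lemma aux_int_exp (g : ℝ → ℝ) (hg : IntegrableOn g (Ioi 0)) (s : ℝ) (hs : 0 ≤ s) :
    IntegrableOn (fun t => Real.exp (-s * t) * g t) (Ioi 0) := by
  refine Integrable.mono' hg.norm ?_ ?_
  · exact ((Real.continuous_exp.comp (by continuity)).aestronglyMeasurable).mul hg.1
  · rw [ae_restrict_iff' measurableSet_Ioi]
    filter_upwards with t ht
    have h1 : Real.exp (-s * t) ≤ 1 :=
      Real.exp_le_one_iff.mpr (by simp [mul_nonneg hs (le_of_lt ht)])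
    calc ‖Real.exp (-s * t) * g t‖ = ‖Real.exp (-s * t)‖ * ‖g t‖ := norm_mul _ _
      _ ≤ 1 * ‖g t‖ := by
          gcongr
          rw [Real.norm_eq_abs, abs_of_pos (Real.exp_pos _)]
          exact h1
      _ = ‖g t‖ := one_mul _

-- polynomial with zero constant coefficient applied to exp(-t) integrates against g to 0
lemma aux_poly (g : ℝ → ℝ) (hg : IntegrableOn g (Ioi 0))
    (hlap : ∀ s : ℝ, 0 < s → ∫ t in Ioi (0:ℝ), Real.exp (-s * t) * g t = 0)
    (q : ℝ[X]) (hq : q.coeff 0 = 0) :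
    ∫ t in Ioi (0:ℝ), q.eval (Real.exp (-t)) * g t = 0 := by
  have hrw : ∀ t : ℝ, q.eval (Real.exp (-t)) * g t
      = ∑ i ∈ Finset.range (q.natDegree + 1), q.coeff i * (Real.exp (-t)) ^ i * g t := by
    intro t
    rw [Polynomial.eval_eq_sum_range, Finset.sum_mul]
  calc ∫ t in Ioi (0:ℝ), q.eval (Real.exp (-t)) * g t
      = ∫ t in Ioi (0:ℝ), ∑ i ∈ Finset.range (q.natDegree + 1),
          q.coeff i * (Real.exp (-t)) ^ i * g t := by
        exact integral_congr_ae (Filter.Eventually.of_forall fun t => hrw t)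
    _ = ∑ i ∈ Finset.range (q.natDegree + 1),
          ∫ t in Ioi (0:ℝ), q.coeff i * (Real.exp (-t)) ^ i * g t := by
        refine integral_finset_sum _ fun i _ => ?_
        have := aux_int g hg (fun x => q.coeff i * x ^ i) (by continuity)
        simpa [mul_assoc, IntegrableOn] using this
    _ = 0 := by
        refine Finset.sum_eq_zero fun i _ => ?_
        rcases Nat.eq_zero_or_pos i with h0 | hpos
        · simp [h0, hq]
        · have : ∀ t : ℝ, q.coeff i * (Real.exp (-t)) ^ i * g t
              = q.coeff i * (Real.exp (-(i:ℝ) * t) * g t) := by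
            intro t
            rw [← Real.exp_nat_mul]
            ring_nf
          rw [integral_congr_ae (Filter.Eventually.of_forall this), integral_const_mul,
            hlap (i : ℝ) (by exact_mod_cast hpos), mul_zero]

lemma aux_weier (ψ : ℝ → ℝ) (hψcont : Continuous ψ) (hψ0 : ψ 0 = 0)
    (ε : ℝ) (hε : 0 < ε) :
    ∃ q : ℝ[X], q.coeff 0 = 0 ∧ ∀ x ∈ Icc (0:ℝ) 1, |ψ x - q.eval x| ≤ 2 * ε := by
  obtain ⟨p, hp⟩ := exists_polynomial_near_continuousMap 0 1
    ⟨fun x => ψ x.1, hψcont.comp continuous_subtype_val⟩ ε hε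
  have hpt : ∀ x : ℝ, x ∈ Icc (0:ℝ) 1 → |p.eval x - ψ x| ≤ ε := by
    intro x hx
    have := (p.toContinuousMapOn (Icc (0:ℝ) 1) -
      ⟨fun x => ψ x.1, hψcont.comp continuous_subtype_val⟩).norm_coe_le_norm ⟨x, hx⟩
    simpa [Real.norm_eq_abs] using le_trans this hp.le
  refine ⟨p - Polynomial.C (p.eval 0), ?_, ?_⟩
  · simp [Polynomial.coeff_sub, Polynomial.coeff_zero_eq_eval_zero]
  · intro x hx
    have h1 := hpt x hx
    have h2 := hpt 0 (by simp)
    rw [hψ0, sub_zero] at h2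
    simp only [Polynomial.eval_sub, Polynomial.eval_C]
    have : ψ x - (p.eval x - p.eval 0) = -(p.eval x - ψ x) + p.eval 0 := by ring
    rw [this]
    calc |(-(p.eval x - ψ x) + p.eval 0)| ≤ |(-(p.eval x - ψ x))| + |p.eval 0| := abs_add_le _ _
      _ ≤ ε + ε := by rw [abs_neg]; exact add_le_add h1 h2
      _ = 2 * ε := by ring

lemma aux_eps (g : ℝ → ℝ) (hg : IntegrableOn g (Ioi 0))
    (hlap : ∀ s : ℝ, 0 < s → ∫ t in Ioi (0:ℝ), Real.exp (-s * t) * g t = 0)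
    (ψ : ℝ → ℝ) (hψcont : Continuous ψ) (hψ0 : ψ 0 = 0)
    (ε : ℝ) (hε : 0 < ε) :
    |∫ t in Ioi (0:ℝ), ψ (Real.exp (-t)) * g t|
      ≤ ε * (2 * ∫ t in Ioi (0:ℝ), ‖g t‖) := by
  obtain ⟨q, hq0, hqpt⟩ := aux_weier ψ hψcont hψ0 ε hε
  have hint1 : IntegrableOn (fun t => ψ (Real.exp (-t)) * g t) (Ioi 0) :=
    aux_int g hg ψ hψcont
  have hint2 : IntegrableOn (fun t => q.eval (Real.exp (-t)) * g t) (Ioi 0) :=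
    aux_int g hg (fun x => q.eval x) q.continuous_aeval
  have hzero : ∫ t in Ioi (0:ℝ), q.eval (Real.exp (-t)) * g t = 0 :=
    aux_poly g hg hlap q hq0
  have hIJ : (∫ t in Ioi (0:ℝ), ψ (Real.exp (-t)) * g t)
      = ∫ t in Ioi (0:ℝ), (ψ (Real.exp (-t)) - q.eval (Real.exp (-t))) * g t := by
    have h := integral_sub hint1 hint2
    rw [hzero, sub_zero] at h
    rw [← h]
    exact integral_congr_ae (Filter.Eventually.of_forall fun t => by ring)
  rw [hIJ]
  calc |∫ t in Ioi (0:ℝ), (ψ (Real.exp (-t)) - q.eval (Real.exp (-t))) * g t|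
      ≤ ∫ t in Ioi (0:ℝ), ‖(ψ (Real.exp (-t)) - q.eval (Real.exp (-t))) * g t‖ := by
        simpa [Real.norm_eq_abs] using
          norm_integral_le_integral_norm
            (fun t => (ψ (Real.exp (-t)) - q.eval (Real.exp (-t))) * g t)
              (μ := volume.restrict (Ioi (0:ℝ)))
    _ ≤ ∫ t in Ioi (0:ℝ), 2 * ε * ‖g t‖ := by
        have hsub : IntegrableOn
            (fun t => (ψ (Real.exp (-t)) - q.eval (Real.exp (-t))) * g t) (Ioi 0) :=
          (hint1.sub hint2).congr
            (Filter.Eventually.of_forall fun t => by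
              simp only [Pi.sub_apply]
              ring)
        refine setIntegral_mono_on hsub.norm (hg.norm.const_mul _)
          measurableSet_Ioi fun t ht => ?_
        have hmem : Real.exp (-t) ∈ Icc (0:ℝ) 1 :=
          ⟨(Real.exp_pos _).le, Real.exp_le_one_iff.mpr (by simpa using ht.le)⟩
        calc ‖(ψ (Real.exp (-t)) - q.eval (Real.exp (-t))) * g t‖
            = |ψ (Real.exp (-t)) - q.eval (Real.exp (-t))| * ‖g t‖ := by
              rw [norm_mul]; rfl
          _ ≤ 2 * ε * ‖g t‖ := by gcongr; exact hqpt _ hmem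
    _ = ε * (2 * ∫ t in Ioi (0:ℝ), ‖g t‖) := by
        rw [integral_const_mul]; ring

lemma aux_zero_of_forall_eps (I C : ℝ) (hC : 0 ≤ C)
    (key : ∀ ε : ℝ, 0 < ε → |I| ≤ ε * C) : I = 0 := by
  have : |I| ≤ 0 := by
    refine le_of_forall_pos_le_add fun ε hε => ?_
    have h1 := key (ε / (C + 1)) (by positivity)
    have h2 : (ε / (C + 1)) * C ≤ ε := by
      rw [div_mul_eq_mul_div, div_le_iff₀ (by positivity)]
      nlinarith
    linarith
  exact abs_nonpos_iff.mp this

lemma aux_phi (g : ℝ → ℝ) (hg : IntegrableOn g (Ioi 0))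
    (hlap : ∀ s : ℝ, 0 < s → ∫ t in Ioi (0:ℝ), Real.exp (-s * t) * g t = 0)
    (φ : ℝ → ℝ) (hφc : HasCompactSupport φ) (hφcont : Continuous φ)
    (hsupp : tsupport φ ⊆ Ioi 0) :
    ∫ t, φ t * g t = 0 := by
  obtain ⟨R, hRpos, hR⟩ := hφc.exists_pos_le_norm
  have hδpos : (0:ℝ) < Real.exp (-(R + 1)) := Real.exp_pos _
  set ψ : ℝ → ℝ := fun x => φ (-Real.log (max x (Real.exp (-(R + 1))))) with hψ
  have hψcont : Continuous ψ := by
    apply hφcont.comp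
    apply Continuous.neg
    rw [continuous_iff_continuousAt]
    intro x
    exact (Real.continuousAt_log (by positivity)).comp (by fun_prop)
  have hφR : φ (R + 1) = 0 := hR _ (by rw [Real.norm_eq_abs, abs_of_pos (by linarith)]; linarith)
  have hlogδ : -Real.log (Real.exp (-(R + 1))) = R + 1 := by rw [Real.log_exp]; ring
  have hψφ : ∀ t : ℝ, 0 < t → ψ (Real.exp (-t)) = φ t := by
    intro t ht
    rcases le_or_gt (Real.exp (-(R + 1))) (Real.exp (-t)) with h | h
    · simp only [hψ, max_eq_left h, Real.log_exp, neg_neg]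
    · have ht2 : R + 1 < t := by
        have := Real.exp_lt_exp.mp h
        linarith
      have hφt : φ t = 0 := hR t (by rw [Real.norm_eq_abs, abs_of_pos ht]; linarith)
      simp only [hψ, max_eq_right h.le, hlogδ, hφR, hφt]
  have hψ0 : ψ 0 = 0 := by
    simp only [hψ, max_eq_right hδpos.le, hlogδ, hφR]
  have hset : ∫ t, φ t * g t = ∫ t in Ioi (0:ℝ), ψ (Real.exp (-t)) * g t := by
    rw [← setIntegral_eq_integral_of_forall_compl_eq_zero (s := Ioi (0:ℝ))
      (fun x hx => by rw [image_eq_zero_of_notMem_tsupport (fun hm => hx (hsupp hm)), zero_mul])]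
    exact setIntegral_congr_fun measurableSet_Ioi fun t ht => by rw [hψφ t ht]
  rw [hset]
  refine aux_zero_of_forall_eps _ (2 * ∫ t in Ioi (0:ℝ), ‖g t‖) (by positivity) ?_
  exact fun ε hε => aux_eps g hg hlap ψ hψcont hψ0 ε hε

theorem laplace_transform_injective (f₁ f₂ : ℝ → ℝ)
    (h₁ : IntegrableOn f₁ (Ioi 0))
    (h₂ : IntegrableOn f₂ (Ioi 0))
    (heq : ∀ s : ℝ, 0 < s →
      ∫ t in Ioi (0:ℝ), Real.exp (-s * t) * f₁ t
        = ∫ t in Ioi (0:ℝ), Real.exp (-s * t) * f₂ t) :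
    ∀ᵐ t ∂(volume.restrict (Ioi (0:ℝ))), f₁ t = f₂ t := by
  have hg : IntegrableOn (fun t => f₁ t - f₂ t) (Ioi 0) := h₁.sub h₂
  have hlap : ∀ s : ℝ, 0 < s →
      ∫ t in Ioi (0:ℝ), Real.exp (-s * t) * (f₁ t - f₂ t) = 0 := by
    intro s hs
    have e1 := aux_int_exp f₁ h₁ s hs.le
    have e2 := aux_int_exp f₂ h₂ s hs.le
    have h0 : ∫ t in Ioi (0:ℝ),
        (Real.exp (-s * t) * f₁ t - Real.exp (-s * t) * f₂ t) = 0 := by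
      rw [integral_sub e1 e2, heq s hs, sub_self]
    have hcg : ∫ t in Ioi (0:ℝ), Real.exp (-s * t) * (f₁ t - f₂ t)
        = ∫ t in Ioi (0:ℝ),
            (Real.exp (-s * t) * f₁ t - Real.exp (-s * t) * f₂ t) :=
      integral_congr_ae (Filter.Eventually.of_forall fun t => by ring)
    rw [hcg]
    exact h0
  have hmain := isOpen_Ioi.ae_eq_zero_of_integral_contDiff_smul_eq_zero
    (U := Ioi (0:ℝ)) (f := fun t => f₁ t - f₂ t) (μ := volume)
    (hg.locallyIntegrableOn)
    (fun φ hφ hφc hφs => by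
      simp only [smul_eq_mul]
      exact aux_phi (fun t => f₁ t - f₂ t) hg hlap φ hφc hφ.continuous hφs)
  rw [ae_restrict_iff' measurableSet_Ioi]
  filter_upwards [hmain] with t ht hmem
  exact sub_eq_zero.mp (ht hmem)
end
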